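/- Let A be a synaptic algebra. For all a, b ∈ A, if a ≤ₛ b (spectral order) then a ≤ b (synaptic order). -/
import Mathlib


open Filter Topology

/-- The order-unit norm associated with an order relation `le` on a real algebra:
`‖a‖ = inf {λ > 0 : −λ ≤ a ≤ λ}`. -/
noncomputable def ouNorm {R : Type*} [Ring R] [Algebra ℝ R] (le : R → R → Prop) (a : R) : ℝ :=
  sInf {l : ℝ | 0 < l ∧ le (algebraMap ℝ R (-l)) a ∧ le a (algebraMap ℝ R l)}

/-- A synaptic algebra: a real linear subspace `A` (containing `1`) of a unital associative
algebra `R` over `ℝ` (a complex algebra is in particular a real algebra), equipped with a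
partial order making it an Archimedean partially ordered real linear space with order unit `1`,
and satisfying axioms SA1–SA8.  The square root (SA5) and the carrier (SA6) are bundled as
data together with their defining properties. -/
structure SynapticAlgebra (R : Type*) [Ring R] [Algebra ℝ R] where
  A : Submodule ℝ R
  one_mem : (1 : R) ∈ A
  /-- the synaptic order (meaningful on elements of `A`) -/
  le : R → R → Prop
  -- SA1 : Archimedean partially ordered real linear space with order unit 1
  le_refl : ∀ a ∈ A, le a a
  le_antisymm : ∀ a ∈ A, ∀ b ∈ A, le a b → le b a → a = b
  le_trans : ∀ a ∈ A, ∀ b ∈ A, ∀ c ∈ A, le a b → le b c → le a c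
  add_le_add_right : ∀ a ∈ A, ∀ b ∈ A, ∀ c ∈ A, le a b → le (a + c) (b + c)
  smul_nonneg : ∀ r : ℝ, 0 ≤ r → ∀ a ∈ A, le 0 a → le 0 (r • a)
  arch : ∀ a ∈ A, ∀ b ∈ A, (∀ n : ℕ, le ((n : ℝ) • a) b) → le a 0
  one_order_unit : ∀ a ∈ A, ∃ n : ℕ, le a ((n : ℝ) • (1 : R))
  zero_ne_one : (0 : R) ≠ 1
  -- SA2
  sq_mem : ∀ a ∈ A, a * a ∈ A
  sq_nn : ∀ a ∈ A, le 0 (a * a)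
  -- SA3
  quad_mem : ∀ a ∈ A, ∀ b ∈ A, a * b * a ∈ A
  quad_nn : ∀ a ∈ A, ∀ b ∈ A, le 0 a → le 0 b → le 0 (a * b * a)
  -- SA4
  quad_zero : ∀ a ∈ A, ∀ b ∈ A, le 0 b → a * b * a = 0 → a * b = 0 ∧ b * a = 0
  -- SA5 : square roots
  sqrt : R → R
  sqrt_mem : ∀ a ∈ A, le 0 a → sqrt a ∈ A
  sqrt_nn : ∀ a ∈ A, le 0 a → le 0 (sqrt a)
  sqrt_sq : ∀ a ∈ A, le 0 a → sqrt a * sqrt a = a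
  sqrt_bicomm : ∀ a ∈ A, le 0 a → ∀ b ∈ A, a * b = b * a → sqrt a * b = b * sqrt a
  sqrt_unique : ∀ a ∈ A, le 0 a → ∀ b ∈ A, le 0 b → b * b = a →
    (∀ c ∈ A, a * c = c * a → b * c = c * b) → b = sqrt a
  -- SA6 : carriers
  carr : R → R
  carr_mem : ∀ a ∈ A, carr a ∈ A
  carr_idem : ∀ a ∈ A, carr a * carr a = carr a
  carr_spec : ∀ a ∈ A, ∀ b ∈ A, (a * b = 0 ↔ carr a * b = 0)
  -- SA7
  inv_exists : ∀ a ∈ A, le 1 a → ∃ b ∈ A, a * b = 1 ∧ b * a = 1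
  -- SA8
  comm_closed : ∀ a ∈ A, ∀ b ∈ A, ∀ f : ℕ → R, (∀ n, f n ∈ A) →
    (∀ n, le (f n) (f (n + 1))) → (∀ m n, f m * f n = f n * f m) →
    (∀ n, f n * b = b * f n) →
    Filter.Tendsto (fun n => ouNorm le (a - f n)) Filter.atTop (nhds 0) →
    a * b = b * a

namespace SynapticAlgebra

variable {R : Type*} [Ring R] [Algebra ℝ R] (S : SynapticAlgebra R)

/-- `|a| := (a²)^{1/2}`. -/
def absval (a : R) : R := S.sqrt (a * a)

/-- The positive part `a⁺ := (|a| + a)/2`. -/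
noncomputable def pospart (a : R) : R := (2⁻¹ : ℝ) • (S.absval a + a)

/-- The spectral resolution `p_{a,λ} := 1 − ((a − λ)⁺)°`. -/
noncomputable def specProj (a : R) (l : ℝ) : R :=
  1 - S.carr (S.pospart (a - algebraMap ℝ R l))

/-- The spectral order: `a ≤ₛ b` iff `p_{b,λ} ≤ p_{a,λ}` for all real `λ`. -/
noncomputable def specLE (a b : R) : Prop :=
  ∀ l : ℝ, S.le (S.specProj b l) (S.specProj a l)

/-- Projections of the synaptic algebra. -/
def IsProj (p : R) : Prop := p ∈ S.A ∧ p * p = p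

/-- The set `E = {e ∈ A : 0 ≤ e ≤ 1}` of effects. -/
def effects : Set R := {e | e ∈ S.A ∧ S.le 0 e ∧ S.le e 1}

/-- `p` is the infimum of the set `T` in the orthomodular lattice `P` of projections. -/
def IsProjInf (p : R) (T : Set R) : Prop :=
  S.IsProj p ∧ (∀ q ∈ T, S.le p q) ∧ ∀ r, S.IsProj r → (∀ q ∈ T, S.le r q) → S.le r p

/-- `p` is the supremum of the set `T` in the orthomodular lattice `P` of projections. -/
def IsProjSup (p : R) (T : Set R) : Prop :=
  S.IsProj p ∧ (∀ q ∈ T, S.le q p) ∧ ∀ r, S.IsProj r → (∀ q ∈ T, S.le q r) → S.le p r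

/-- A Banach (norm-complete) synaptic algebra: every Cauchy sequence in `A`
(w.r.t. the order-unit norm) converges in norm to an element of `A`. -/
noncomputable def IsBanach : Prop :=
  ∀ f : ℕ → R, (∀ n, f n ∈ S.A) →
    (∀ ε : ℝ, 0 < ε → ∃ N : ℕ, ∀ m ≥ N, ∀ n ≥ N, ouNorm S.le (f m - f n) < ε) →
    ∃ a ∈ S.A, Filter.Tendsto (fun n => ouNorm S.le (a - f n)) Filter.atTop (nhds 0)

/-- The `λ`-eigenprojection `d_{a,λ} := 1 − (a − λ)°`. -/
noncomputable def eigenProj (a : R) (l : ℝ) : R := 1 - S.carr (a - algebraMap ℝ R l)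

/-- The bicommutant `CC(a)` (within `A`). -/
def Bicomm (a : R) : Set R :=
  {b | b ∈ S.A ∧ ∀ c ∈ S.A, a * c = c * a → b * c = c * b}

/-- Projections `p` and `q` are exchanged by a symmetry (`s² = 1`, `sps = q`). -/
def ExchBySymm (p q : R) : Prop := ∃ s ∈ S.A, s * s = 1 ∧ s * p * s = q

/-- The dimension equivalence on projections: a finite chain of projections, consecutive
ones exchanged by symmetries. -/
def DimEquiv (p q : R) : Prop :=
  ∃ (n : ℕ) (c : ℕ → R), c 0 = p ∧ c n = q ∧ (∀ i ≤ n, S.IsProj (c i)) ∧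
    ∀ i < n, S.ExchBySymm (c i) (c (i + 1))

/-- `A` is of finite type iff every projection is finite. -/
def FiniteType : Prop :=
  ∀ p, S.IsProj p → ∀ q, S.IsProj q → S.DimEquiv q p → S.le q p → q = p

/-- The projection lattice `P` is a complete orthomodular lattice: every set of projections
has an infimum and a supremum in `P`. -/
def ProjComplete : Prop :=
  ∀ T : Set R, (∀ p ∈ T, S.IsProj p) →
    (∃ q, S.IsProjInf q T) ∧ (∃ q, S.IsProjSup q T)

/-- A bounded resolution of identity with bound `K`. -/
def IsBoundedResId (p : ℝ → R) (K : ℝ) : Prop :=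
  0 ≤ K ∧ (∀ l, S.IsProj (p l)) ∧
  (∀ l, l < -K → p l = 0) ∧ (∀ l, K ≤ l → p l = 1) ∧
  (∀ l l', l ≤ l' → S.le (p l) (p l')) ∧
  (∀ l, S.IsProjInf (p l) {x | ∃ l' > l, x = p l'})

end SynapticAlgebra

/-- `c` is a regular involution on the subset `T` of the poset `(T, le')`. -/
def IsRegInvPoset {R : Type*} (le' : R → R → Prop) (T : Set R) (c : R → R) : Prop :=
  (∀ a ∈ T, c a ∈ T) ∧ (∀ a ∈ T, c (c a) = a) ∧
  (∀ a ∈ T, ∀ b ∈ T, le' a b → le' (c b) (c a)) ∧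
  (∀ a ∈ T, ∀ b ∈ T, le' a (c a) → le' b (c b) → le' a (c b))

/-- `(T, le', c, 0, 1)` is a Kleene poset: a bounded poset with a regular involution. -/
def IsKleene {R : Type*} [Zero R] [One R] (le' : R → R → Prop) (T : Set R) (c : R → R) : Prop :=
  IsRegInvPoset le' T c ∧ (0 : R) ∈ T ∧ (1 : R) ∈ T ∧ ∀ a ∈ T, le' 0 a ∧ le' a 1

/-- Every pair of elements of `T` has an infimum and a supremum in `(T, le')`. -/
def HasBinSupInf {R : Type*} (le' : R → R → Prop) (T : Set R) : Prop :=
  ∀ a ∈ T, ∀ b ∈ T,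
    (∃ m ∈ T, le' m a ∧ le' m b ∧ ∀ x ∈ T, le' x a → le' x b → le' x m) ∧
    (∃ j ∈ T, le' a j ∧ le' b j ∧ ∀ x ∈ T, le' a x → le' b x → le' j x)

namespace SynapticAlgebra

variable {R : Type*} [Ring R] [Algebra ℝ R] (S : SynapticAlgebra R)

theorem sub_nonneg' {a b : R} (ha : a ∈ S.A) (hb : b ∈ S.A) :
    S.le a b ↔ S.le 0 (b - a) := by
  constructor
  · intro h
    have := S.add_le_add_right a ha b hb (-a) (S.A.neg_mem ha) h
    simpa [sub_eq_add_neg] using this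
  · intro h
    have := S.add_le_add_right 0 S.A.zero_mem (b - a) (S.A.sub_mem hb ha) a ha h
    simpa using this

theorem le_trans' {a b c : R} (ha : a ∈ S.A) (hb : b ∈ S.A) (hc : c ∈ S.A)
    (h1 : S.le a b) (h2 : S.le b c) : S.le a c := S.le_trans a ha b hb c hc h1 h2

theorem add_nonneg' {a b : R} (ha : a ∈ S.A) (hb : b ∈ S.A)
    (h1 : S.le 0 a) (h2 : S.le 0 b) : S.le 0 (a + b) := by
  have h3 : S.le b (a + b) := by
    have := S.add_le_add_right 0 S.A.zero_mem a ha b hb h1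
    simpa using this
  exact S.le_trans' S.A.zero_mem hb (S.A.add_mem ha hb) h2 h3

theorem add_le_add' {a b c d : R} (ha : a ∈ S.A) (hb : b ∈ S.A) (hc : c ∈ S.A) (hd : d ∈ S.A)
    (h1 : S.le a b) (h2 : S.le c d) : S.le (a + c) (b + d) := by
  rw [S.sub_nonneg' (S.A.add_mem ha hc) (S.A.add_mem hb hd)]
  have : b + d - (a + c) = (b - a) + (d - c) := by abel
  rw [this]
  exact S.add_nonneg' (S.A.sub_mem hb ha) (S.A.sub_mem hd hc)
    ((S.sub_nonneg' ha hb).1 h1) ((S.sub_nonneg' hc hd).1 h2)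

theorem smul_le_smul' {a b : R} {r : ℝ} (hr : 0 ≤ r) (ha : a ∈ S.A) (hb : b ∈ S.A)
    (h : S.le a b) : S.le (r • a) (r • b) := by
  rw [S.sub_nonneg' (S.A.smul_mem r ha) (S.A.smul_mem r hb)]
  rw [← smul_sub]
  exact S.smul_nonneg r hr _ (S.A.sub_mem hb ha) ((S.sub_nonneg' ha hb).1 h)

theorem one_nonneg : S.le 0 (1 : R) := by
  have := S.sq_nn 1 S.one_mem
  simpa using this

theorem smul_one_nonneg {r : ℝ} (hr : 0 ≤ r) : S.le 0 (r • (1 : R)) :=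
  S.smul_nonneg r hr 1 S.one_mem S.one_nonneg

theorem jordan_mem {a b : R} (ha : a ∈ S.A) (hb : b ∈ S.A) : a * b + b * a ∈ S.A := by
  have h : a * b + b * a = (a + b) * (a + b) - a * a - b * b := by noncomm_ring
  rw [h]
  exact S.A.sub_mem (S.A.sub_mem (S.sq_mem _ (S.A.add_mem ha hb)) (S.sq_mem a ha)) (S.sq_mem b hb)

theorem mul_mem_of_comm {a b : R} (ha : a ∈ S.A) (hb : b ∈ S.A) (h : a * b = b * a) :
    a * b ∈ S.A := by
  have : a * b = (2⁻¹ : ℝ) • (a * b + b * a) := by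
    rw [← h, smul_add, ← smul_add]
    rw [show a * b + a * b = (2:ℝ) • (a * b) by rw [two_smul], smul_smul]
    norm_num
  rw [this]
  exact S.A.smul_mem _ (S.jordan_mem ha hb)

theorem sq_eq_zero' {a : R} (ha : a ∈ S.A) (h : a * a = 0) : a = 0 := by
  have h1 : a * 1 * a = 0 := by simpa using h
  have := (S.quad_zero a ha 1 S.one_mem S.one_nonneg h1).1
  simpa using this

theorem mul_eq_zero_symm {a b : R} (ha : a ∈ S.A) (hb : b ∈ S.A) (h : a * b = 0) :
    b * a = 0 := by
  have hmem : b * a ∈ S.A := by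
    have he : b * a = (a * b + b * a) - a * b := by abel
    rw [he]
    exact S.A.sub_mem (S.jordan_mem ha hb) (by rw [h]; exact S.A.zero_mem)
  have hsq : (b * a) * (b * a) = 0 := by
    have he : (b * a) * (b * a) = b * (a * b) * a := by noncomm_ring
    rw [he, h, mul_zero, zero_mul]
  exact S.sq_eq_zero' hmem hsq

theorem mul_nonneg_of_comm {a b : R} (ha : a ∈ S.A) (hb : b ∈ S.A)
    (h1 : S.le 0 a) (h2 : S.le 0 b) (h : a * b = b * a) : S.le 0 (a * b) := by
  have hwm : S.sqrt a ∈ S.A := S.sqrt_mem a ha h1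
  have hwb : S.sqrt a * b = b * S.sqrt a := S.sqrt_bicomm a ha h1 b hb h
  have key : a * b = S.sqrt a * b * S.sqrt a := by
    calc a * b = (S.sqrt a * S.sqrt a) * b := by rw [S.sqrt_sq a ha h1]
    _ = S.sqrt a * (S.sqrt a * b) := by rw [mul_assoc]
    _ = S.sqrt a * (b * S.sqrt a) := by rw [hwb]
    _ = S.sqrt a * b * S.sqrt a := by rw [mul_assoc]
  rw [key]
  exact S.quad_nn _ hwm b hb (S.sqrt_nn a ha h1) h2

theorem conj_mono {a b r : R} (ha : a ∈ S.A) (hb : b ∈ S.A) (hr : r ∈ S.A)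
    (hrn : S.le 0 r) (h : S.le a b) : S.le (r * a * r) (r * b * r) := by
  rw [S.sub_nonneg' (S.quad_mem r hr a ha) (S.quad_mem r hr b hb)]
  have : r * b * r - r * a * r = r * (b - a) * r := by noncomm_ring
  rw [this]
  exact S.quad_nn r hr (b - a) (S.A.sub_mem hb ha) hrn ((S.sub_nonneg' ha hb).1 h)

end SynapticAlgebra
namespace SynapticAlgebra

variable {R : Type*} [Ring R] [Algebra ℝ R] (S : SynapticAlgebra R)

/-- pure ring helpers -/
theorem comm_mul' {a x y : R} (h1 : a * x = x * a) (h2 : a * y = y * a) :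
    a * (x * y) = (x * y) * a := by
  rw [← mul_assoc, h1, mul_assoc, h2, mul_assoc]

theorem comm_sub' {a x y : R} (h1 : a * x = x * a) (h2 : a * y = y * a) :
    a * (x - y) = (x - y) * a := by
  rw [mul_sub, sub_mul, h1, h2]

theorem comm_add' {a x y : R} (h1 : a * x = x * a) (h2 : a * y = y * a) :
    a * (x + y) = (x + y) * a := by
  rw [mul_add, add_mul, h1, h2]

theorem comm_smul' {a x : R} (r : ℝ) (h1 : a * x = x * a) :
    a * (r • x) = (r • x) * a := by
  rw [mul_smul_comm, smul_mul_assoc, h1]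

theorem inv_comm_ring {z t b : R} (h1 : z * t = 1) (h2 : t * z = 1) (h : z * b = b * z) :
    t * b = b * t := by
  calc t * b = t * b * 1 := (mul_one _).symm
  _ = t * b * (z * t) := by rw [h1]
  _ = t * (b * z) * t := by noncomm_ring
  _ = t * (z * b) * t := by rw [h]
  _ = (t * z) * b * t := by noncomm_ring
  _ = b * t := by rw [h2, one_mul]

theorem arch_le' {x y : R} (hx : x ∈ S.A) (hy : y ∈ S.A)
    (h : ∀ ε : ℝ, 0 < ε → S.le x (y + ε • 1)) : S.le x y := by
  have hsub : x - y ∈ S.A := S.A.sub_mem hx hy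
  have key : ∀ n : ℕ, S.le ((n : ℝ) • (x - y)) (1 : R) := by
    intro n
    rcases Nat.eq_zero_or_pos n with h0 | h0
    · subst h0
      simpa using S.one_nonneg
    · have hn : (0:ℝ) < (n:ℝ) := by exact_mod_cast h0
      have hε : (0:ℝ) < (n:ℝ)⁻¹ := by positivity
      have h2 : S.le (x - y) ((n:ℝ)⁻¹ • 1) := by
        rw [S.sub_nonneg' hsub (S.A.smul_mem _ S.one_mem)]
        have h3 := (S.sub_nonneg' hx (S.A.add_mem hy (S.A.smul_mem _ S.one_mem))).1 (h _ hε)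
        have he : y + (n:ℝ)⁻¹ • (1:R) - x = (n:ℝ)⁻¹ • (1:R) - (x - y) := by abel
        rwa [he] at h3
      have h4 := S.smul_le_smul' (le_of_lt hn) hsub (S.A.smul_mem _ S.one_mem) h2
      rwa [smul_smul, mul_inv_cancel₀ (ne_of_gt hn), one_smul] at h4
  have h5 := S.arch (x - y) hsub 1 S.one_mem key
  have h6 := S.add_le_add_right (x - y) hsub 0 S.A.zero_mem y hy h5
  simpa using h6

theorem le_one_of_sq_le_one {d : R} (hd : d ∈ S.A) (h : S.le (d * d) 1) : S.le d 1 := by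
  have h1 : S.le 0 (1 - d * d) := (S.sub_nonneg' (S.sq_mem d hd) S.one_mem).1 h
  have key : (1 - d) * (1 - d) + (1 - d * d) = (2:ℝ) • (1 - d) := by
    rw [two_smul]; noncomm_ring
  have h2 : S.le 0 ((2:ℝ) • (1 - d)) := by
    rw [← key]
    exact S.add_nonneg' (S.sq_mem _ (S.A.sub_mem S.one_mem hd))
      (S.A.sub_mem S.one_mem (S.sq_mem d hd)) (S.sq_nn _ (S.A.sub_mem S.one_mem hd)) h1
  have h3 := S.smul_nonneg (2⁻¹:ℝ) (by norm_num) _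
    (S.A.smul_mem _ (S.A.sub_mem S.one_mem hd)) h2
  rw [smul_smul] at h3
  norm_num at h3
  exact (S.sub_nonneg' hd S.one_mem).2 h3

theorem exists_inv {h : R} (hh : h ∈ S.A) (hpos : S.le 0 h) {ε : ℝ} (hε : 0 < ε) :
    ∃ t ∈ S.A, (h + ε • 1) * t = 1 ∧ t * (h + ε • 1) = 1 ∧ S.le 0 t := by
  have hzA : h + ε • (1:R) ∈ S.A := S.A.add_mem hh (S.A.smul_mem _ S.one_mem)
  have hzpos : S.le 0 (h + ε • (1:R)) :=
    S.add_nonneg' hh (S.A.smul_mem _ S.one_mem) hpos (S.smul_one_nonneg (le_of_lt hε))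
  have h1 : S.le 1 (ε⁻¹ • (h + ε • (1:R))) := by
    rw [S.sub_nonneg' S.one_mem (S.A.smul_mem _ hzA)]
    have he : ε⁻¹ • (h + ε • (1:R)) - 1 = ε⁻¹ • h := by
      rw [smul_add, smul_smul, inv_mul_cancel₀ (ne_of_gt hε), one_smul]
      abel
    rw [he]
    exact S.smul_nonneg _ (le_of_lt (by positivity)) h hh hpos
  obtain ⟨b0, hb0A, hb01, hb02⟩ := S.inv_exists _ (S.A.smul_mem _ hzA) h1
  refine ⟨ε⁻¹ • b0, S.A.smul_mem _ hb0A, ?_, ?_, ?_⟩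
  · have : (h + ε • (1:R)) * (ε⁻¹ • b0) = ε⁻¹ • ((h + ε • 1) * b0) := by
      rw [mul_smul_comm]
    rw [this]
    have : (ε⁻¹ • (h + ε • (1:R))) * b0 = ε⁻¹ • ((h + ε • 1) * b0) := by
      rw [smul_mul_assoc]
    rw [← this, hb01]
  · have e1 : (ε⁻¹ • b0) * (h + ε • (1:R)) = ε⁻¹ • (b0 * (h + ε • 1)) := by
      rw [smul_mul_assoc]
    have e2 : b0 * (ε⁻¹ • (h + ε • (1:R))) = ε⁻¹ • (b0 * (h + ε • 1)) := by
      rw [mul_smul_comm]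
    rw [e1, ← e2, hb02]
  · -- positivity of the inverse
    have hzt : (h + ε • (1:R)) * (ε⁻¹ • b0) = 1 := by
      rw [mul_smul_comm, ← smul_mul_assoc, hb01]
    have htz : (ε⁻¹ • b0) * (h + ε • (1:R)) = 1 := by
      rw [smul_mul_assoc, ← mul_smul_comm, hb02]
    set t := ε⁻¹ • b0 with ht
    have htA : t ∈ S.A := S.A.smul_mem _ hb0A
    have hw : S.sqrt (h + ε • (1:R)) ∈ S.A := S.sqrt_mem _ hzA hzpos
    have hwz : S.sqrt (h + ε • (1:R)) * (h + ε • (1:R)) =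
        (h + ε • (1:R)) * S.sqrt (h + ε • (1:R)) := S.sqrt_bicomm _ hzA hzpos _ hzA rfl
    have htw : t * S.sqrt (h + ε • (1:R)) = S.sqrt (h + ε • (1:R)) * t :=
      inv_comm_ring hzt htz hwz.symm
    have hwt : S.sqrt (h + ε • (1:R)) * t ∈ S.A :=
      S.mul_mem_of_comm hw htA htw.symm
    have hsq : (S.sqrt (h + ε • (1:R)) * t) * (S.sqrt (h + ε • (1:R)) * t) = t := by
      calc (S.sqrt (h + ε • (1:R)) * t) * (S.sqrt (h + ε • (1:R)) * t)
          = S.sqrt (h + ε • (1:R)) * (t * S.sqrt (h + ε • (1:R))) * t := by noncomm_ring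
      _ = S.sqrt (h + ε • (1:R)) * (S.sqrt (h + ε • (1:R)) * t) * t := by rw [htw]
      _ = (S.sqrt (h + ε • (1:R)) * S.sqrt (h + ε • (1:R))) * (t * t) := by noncomm_ring
      _ = (h + ε • (1:R)) * (t * t) := by rw [S.sqrt_sq _ hzA hzpos]
      _ = ((h + ε • (1:R)) * t) * t := by rw [mul_assoc]
      _ = t := by rw [hzt, one_mul]
    rw [← hsq]
    exact S.sq_nn _ hwt

end SynapticAlgebra
namespace SynapticAlgebra
set_option linter.unusedSectionVars false

variable {R : Type*} [Ring R] [Algebra ℝ R] (S : SynapticAlgebra R)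

/-- Key domination lemma: if `0 ≤ h`, `h` and `k` commute and `k² ≤ h²` then `k ≤ h`. -/
theorem le_of_sq_le_sq {h k : R} (hh : h ∈ S.A) (hk : k ∈ S.A) (hpos : S.le 0 h)
    (hcomm : h * k = k * h) (hsq : S.le (k * k) (h * h)) : S.le k h := by
  apply S.arch_le' hk hh
  intro ε hε
  obtain ⟨t, htA, hzt, htz, htn⟩ := S.exists_inv hh hpos hε
  have hzA : h + ε • (1:R) ∈ S.A := S.A.add_mem hh (S.A.smul_mem _ S.one_mem)
  have hzpos : S.le 0 (h + ε • (1:R)) :=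
    S.add_nonneg' hh (S.A.smul_mem _ S.one_mem) hpos (S.smul_one_nonneg (le_of_lt hε))
  have hzk : (h + ε • (1:R)) * k = k * (h + ε • (1:R)) := by
    rw [add_mul, mul_add, hcomm, smul_mul_assoc, mul_smul_comm, one_mul, mul_one]
  have hzh : (h + ε • (1:R)) * h = h * (h + ε • (1:R)) := by
    rw [add_mul, mul_add, smul_mul_assoc, mul_smul_comm, one_mul, mul_one]
  have htk : t * k = k * t := inv_comm_ring hzt htz hzk
  have htz' : t * (h + ε • (1:R)) = (h + ε • (1:R)) * t := by rw [htz, hzt]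
  have hdA : k * t ∈ S.A := S.mul_mem_of_comm hk htA htk.symm
  have hone : ((h + ε • (1:R)) * (h + ε • (1:R))) * (t * t) = 1 := by
    calc ((h + ε • (1:R)) * (h + ε • (1:R))) * (t * t)
        = (h + ε • (1:R)) * (((h + ε • (1:R)) * t) * t) := by noncomm_ring
    _ = (h + ε • (1:R)) * (1 * t) := by rw [hzt]
    _ = 1 := by rw [one_mul, hzt]
  have hdd : (k * t) * (k * t) = (k * k) * (t * t) := by
    calc (k * t) * (k * t) = k * (t * k) * t := by noncomm_ring
    _ = k * (k * t) * t := by rw [htk]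
    _ = (k * k) * (t * t) := by noncomm_ring
  have hMA : (h + ε • (1:R)) * (h + ε • (1:R)) - k * k ∈ S.A :=
    S.A.sub_mem (S.sq_mem _ hzA) (S.sq_mem _ hk)
  have hMpos : S.le 0 ((h + ε • (1:R)) * (h + ε • (1:R)) - k * k) := by
    have he : (h + ε • (1:R)) * (h + ε • (1:R)) - k * k
        = (h * h - k * k) + ((2 * ε) • h + (ε * ε) • (1:R)) := by
      simp only [add_mul, mul_add, smul_mul_assoc, mul_smul_comm, one_mul, mul_one,
        smul_smul, smul_add, two_mul, add_smul]
      abel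
    rw [he]
    refine S.add_nonneg' (S.A.sub_mem (S.sq_mem _ hh) (S.sq_mem _ hk))
      (S.A.add_mem (S.A.smul_mem _ hh) (S.A.smul_mem _ S.one_mem))
      ((S.sub_nonneg' (S.sq_mem _ hk) (S.sq_mem _ hh)).1 hsq) ?_
    exact S.add_nonneg' (S.A.smul_mem _ hh) (S.A.smul_mem _ S.one_mem)
      (S.smul_nonneg _ (by positivity) h hh hpos)
      (S.smul_one_nonneg (by positivity))
  have htX : t * ((h + ε • (1:R)) * (h + ε • (1:R)) - k * k)
      = ((h + ε • (1:R)) * (h + ε • (1:R)) - k * k) * t :=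
    comm_sub' (comm_mul' htz' htz') (comm_mul' htk htk)
  have hXtt : ((h + ε • (1:R)) * (h + ε • (1:R)) - k * k) * (t * t)
      = (t * t) * ((h + ε • (1:R)) * (h + ε • (1:R)) - k * k) :=
    comm_mul' htX.symm htX.symm
  have hsub1 : 1 - (k * t) * (k * t)
      = ((h + ε • (1:R)) * (h + ε • (1:R)) - k * k) * (t * t) := by
    rw [hdd, sub_mul, hone]
  have h1mdd : S.le 0 (1 - (k * t) * (k * t)) := by
    rw [hsub1]
    exact S.mul_nonneg_of_comm hMA (S.sq_mem _ htA) hMpos (S.sq_nn _ htA) hXtt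
  have hdle1 : S.le (k * t) 1 :=
    S.le_one_of_sq_le_one hdA ((S.sub_nonneg' (S.sq_mem _ hdA) S.one_mem).2 h1mdd)
  -- conjugate by sqrt (h + ε)
  have hw : S.sqrt (h + ε • (1:R)) ∈ S.A := S.sqrt_mem _ hzA hzpos
  have hwnn : S.le 0 (S.sqrt (h + ε • (1:R))) := S.sqrt_nn _ hzA hzpos
  have hzd : (h + ε • (1:R)) * (k * t) = (k * t) * (h + ε • (1:R)) :=
    comm_mul' hzk htz'.symm
  have hwd : S.sqrt (h + ε • (1:R)) * (k * t) = (k * t) * S.sqrt (h + ε • (1:R)) :=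
    S.sqrt_bicomm _ hzA hzpos (k * t) hdA hzd
  have h0le : S.le 0 (S.sqrt (h + ε • (1:R)) * (1 - k * t) * S.sqrt (h + ε • (1:R))) :=
    S.quad_nn _ hw (1 - k * t) (S.A.sub_mem S.one_mem hdA) hwnn
      ((S.sub_nonneg' hdA S.one_mem).1 hdle1)
  have hcalc : S.sqrt (h + ε • (1:R)) * (1 - k * t) * S.sqrt (h + ε • (1:R))
      = (h + ε • (1:R)) - k := by
    have e1 : S.sqrt (h + ε • (1:R)) * (1 - k * t) * S.sqrt (h + ε • (1:R))
        = S.sqrt (h + ε • (1:R)) * S.sqrt (h + ε • (1:R))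
          - S.sqrt (h + ε • (1:R)) * (k * t) * S.sqrt (h + ε • (1:R)) := by
      noncomm_ring
    rw [e1, S.sqrt_sq _ hzA hzpos, hwd, mul_assoc, S.sqrt_sq _ hzA hzpos,
      mul_assoc, htz, mul_one]
  rw [hcalc] at h0le
  exact (S.sub_nonneg' hk hzA).2 h0le

end SynapticAlgebra
namespace SynapticAlgebra
set_option linter.unusedSectionVars false

variable {R : Type*} [Ring R] [Algebra ℝ R] (S : SynapticAlgebra R)

theorem le_refl' {a : R} (ha : a ∈ S.A) : S.le a a := S.le_refl a ha

theorem neg_nonneg' {c : R} (hc : c ∈ S.A) (h : S.le c 0) : S.le 0 (-c) := by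
  have := (S.sub_nonneg' hc S.A.zero_mem).1 h
  rwa [zero_sub] at this

theorem central_comm (r : ℝ) (x : R) : (r • (1:R)) * x = x * (r • (1:R)) := by
  rw [smul_mul_assoc, one_mul, mul_smul_comm, mul_one]

theorem absval_mem {c : R} (hc : c ∈ S.A) : S.absval c ∈ S.A :=
  S.sqrt_mem _ (S.sq_mem c hc) (S.sq_nn c hc)

theorem absval_nonneg {c : R} (hc : c ∈ S.A) : S.le 0 (S.absval c) :=
  S.sqrt_nn _ (S.sq_mem c hc) (S.sq_nn c hc)

theorem absval_sq {c : R} (hc : c ∈ S.A) : S.absval c * S.absval c = c * c :=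
  S.sqrt_sq _ (S.sq_mem c hc) (S.sq_nn c hc)

theorem absval_comm {c z : R} (hc : c ∈ S.A) (hz : z ∈ S.A) (h : z * c = c * z) :
    S.absval c * z = z * S.absval c :=
  S.sqrt_bicomm _ (S.sq_mem c hc) (S.sq_nn c hc) z hz (comm_mul' h h).symm

theorem absval_comm_self {c : R} (hc : c ∈ S.A) : S.absval c * c = c * S.absval c :=
  S.absval_comm hc hc rfl

theorem le_absval {c : R} (hc : c ∈ S.A) : S.le c (S.absval c) := by
  apply S.le_of_sq_le_sq (S.absval_mem hc) hc (S.absval_nonneg hc) (S.absval_comm_self hc)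
  rw [S.absval_sq hc]
  exact S.le_refl' (S.sq_mem c hc)

theorem neg_le_absval {c : R} (hc : c ∈ S.A) : S.le (-c) (S.absval c) := by
  apply S.le_of_sq_le_sq (S.absval_mem hc) (S.A.neg_mem hc) (S.absval_nonneg hc)
  · rw [mul_neg, neg_mul, S.absval_comm_self hc]
  · rw [neg_mul_neg, S.absval_sq hc]
    exact S.le_refl' (S.sq_mem c hc)

theorem nonneg_add_eq_zero {x y : R} (hx : x ∈ S.A) (hy : y ∈ S.A)
    (h1 : S.le 0 x) (h2 : S.le 0 y) (h : x + y = 0) : x = 0 := by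
  have h3 : S.le x (x + y) := by
    have := S.add_le_add_right 0 S.A.zero_mem y hy x hx h2
    rw [zero_add, add_comm] at this
    exact this
  rw [h] at h3
  exact S.le_antisymm x hx 0 S.A.zero_mem h3 h1

/-- Uniqueness of commuting nonnegative square roots. -/
theorem sq_root_unique {d w : R} (hd : d ∈ S.A) (hw : w ∈ S.A) (hd0 : S.le 0 d)
    (hw0 : S.le 0 w) (hsq : d * d = w * w) (hcomm : d * w = w * d) : d = w := by
  have hg : d - w ∈ S.A := S.A.sub_mem hd hw
  have hgd : (d - w) * d = d * (d - w) := by rw [sub_mul, mul_sub, hcomm]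
  have hgw : (d - w) * w = w * (d - w) := by rw [sub_mul, mul_sub, hcomm]
  have hggd : d * ((d - w) * (d - w)) = ((d - w) * (d - w)) * d :=
    comm_mul' hgd.symm hgd.symm
  have hggw : w * ((d - w) * (d - w)) = ((d - w) * (d - w)) * w :=
    comm_mul' hgw.symm hgw.symm
  have h1 : S.le 0 (d * ((d - w) * (d - w))) :=
    S.mul_nonneg_of_comm hd (S.sq_mem _ hg) hd0 (S.sq_nn _ hg) hggd
  have h2 : S.le 0 (w * ((d - w) * (d - w))) :=
    S.mul_nonneg_of_comm hw (S.sq_mem _ hg) hw0 (S.sq_nn _ hg) hggw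
  have hsum : d * ((d - w) * (d - w)) + w * ((d - w) * (d - w)) = 0 := by
    have e1 : d * ((d - w) * (d - w)) + w * ((d - w) * (d - w))
        = ((d + w) * (d - w)) * (d - w) := by noncomm_ring
    have e2 : (d + w) * (d - w) = 0 := by
      rw [add_mul, mul_sub, mul_sub, hcomm, hsq]
      abel
    rw [e1, e2, zero_mul]
  have hz1 : d * ((d - w) * (d - w)) = 0 :=
    S.nonneg_add_eq_zero (S.mul_mem_of_comm hd (S.sq_mem _ hg) hggd)
      (S.mul_mem_of_comm hw (S.sq_mem _ hg) hggw) h1 h2 hsum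
  have hz2 : w * ((d - w) * (d - w)) = 0 := by
    have := hsum
    rw [hz1, zero_add] at this
    exact this
  have hggg : ((d - w) * (d - w)) * (d - w) = 0 := by
    have e3 : ((d - w) * (d - w)) * (d - w)
        = ((d - w) * (d - w)) * d - ((d - w) * (d - w)) * w := by noncomm_ring
    rw [e3, ← hggd, ← hggw, hz1, hz2, sub_zero]
  have hg4 : ((d - w) * (d - w)) * ((d - w) * (d - w)) = 0 := by
    rw [← mul_assoc, hggg, zero_mul]
  have hg2 : (d - w) * (d - w) = 0 := S.sq_eq_zero' (S.sq_mem _ hg) hg4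
  have := S.sq_eq_zero' hg hg2
  exact sub_eq_zero.1 this

theorem absval_of_nonneg {c : R} (hc : c ∈ S.A) (h : S.le 0 c) : S.absval c = c :=
  (S.sq_root_unique hc (S.absval_mem hc) h (S.absval_nonneg hc)
    (S.absval_sq hc).symm (S.absval_comm_self hc).symm).symm

theorem absval_of_nonpos {c : R} (hc : c ∈ S.A) (h : S.le c 0) : S.absval c = -c := by
  have h1 : S.absval c = S.absval (-c) := by
    unfold absval
    rw [neg_mul_neg]
  rw [h1]
  exact S.absval_of_nonneg (S.A.neg_mem hc) (S.neg_nonneg' hc h)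

theorem pospart_mem {c : R} (hc : c ∈ S.A) : S.pospart c ∈ S.A :=
  S.A.smul_mem _ (S.A.add_mem (S.absval_mem hc) hc)

theorem pospart_nonneg {c : R} (hc : c ∈ S.A) : S.le 0 (S.pospart c) := by
  apply S.smul_nonneg _ (by norm_num) _ (S.A.add_mem (S.absval_mem hc) hc)
  have := (S.sub_nonneg' (S.A.neg_mem hc) (S.absval_mem hc)).1 (S.neg_le_absval hc)
  rwa [sub_neg_eq_add] at this

theorem negpart_eq {c : R} : S.pospart c - c = (2⁻¹ : ℝ) • (S.absval c - c) := by
  unfold pospart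
  module

theorem negpart_nonneg {c : R} (hc : c ∈ S.A) : S.le 0 (S.pospart c - c) := by
  rw [S.negpart_eq]
  exact S.smul_nonneg _ (by norm_num) _ (S.A.sub_mem (S.absval_mem hc) hc)
    ((S.sub_nonneg' hc (S.absval_mem hc)).1 (S.le_absval hc))

theorem pospart_comm {c z : R} (hc : c ∈ S.A) (hz : z ∈ S.A) (h : z * c = c * z) :
    z * S.pospart c = S.pospart c * z := by
  unfold pospart
  exact comm_smul' _ (comm_add' (S.absval_comm hc hz h).symm h)

theorem pospart_mul_negpart {c : R} (hc : c ∈ S.A) :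
    S.pospart c * (S.pospart c - c) = 0 := by
  rw [S.negpart_eq]
  unfold pospart
  rw [smul_mul_assoc, mul_smul_comm, smul_smul]
  have key : (S.absval c + c) * (S.absval c - c) = 0 := by
    have e1 : (S.absval c + c) * (S.absval c - c)
        = S.absval c * S.absval c - c * c + (c * S.absval c - S.absval c * c) := by
      noncomm_ring
    rw [e1, S.absval_sq hc, S.absval_comm_self hc]
    abel
  rw [key, smul_zero]

theorem negpart_mul_pospart {c : R} (hc : c ∈ S.A) :
    (S.pospart c - c) * S.pospart c = 0 :=
  S.mul_eq_zero_symm (S.pospart_mem hc) (S.A.sub_mem (S.pospart_mem hc) hc)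
    (S.pospart_mul_negpart hc)

theorem pospart_of_nonneg {c : R} (hc : c ∈ S.A) (h : S.le 0 c) : S.pospart c = c := by
  unfold pospart
  rw [S.absval_of_nonneg hc h, ← two_smul ℝ c, smul_smul]
  norm_num

theorem pospart_of_nonpos {c : R} (hc : c ∈ S.A) (h : S.le c 0) : S.pospart c = 0 := by
  unfold pospart
  rw [S.absval_of_nonpos hc h, neg_add_cancel, smul_zero]

theorem pospart_mono_shift {c : R} (hc : c ∈ S.A) {ε : ℝ} (hε : 0 ≤ ε) :
    S.le (S.pospart (c - ε • 1)) (S.pospart c) := by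
  have hc' : c - ε • (1:R) ∈ S.A := S.A.sub_mem hc (S.A.smul_mem _ S.one_mem)
  have hkA : S.absval (c - ε • 1) ∈ S.A := S.absval_mem hc'
  have hhA : S.absval c + ε • (1:R) ∈ S.A :=
    S.A.add_mem (S.absval_mem hc) (S.A.smul_mem _ S.one_mem)
  have hh0 : S.le 0 (S.absval c + ε • (1:R)) :=
    S.add_nonneg' (S.absval_mem hc) (S.A.smul_mem _ S.one_mem) (S.absval_nonneg hc)
      (S.smul_one_nonneg hε)
  -- commutation
  have hmc' : S.absval c * (c - ε • 1) = (c - ε • 1) * S.absval c :=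
    comm_sub' (S.absval_comm_self hc) (central_comm ε (S.absval c)).symm
  have hkm : S.absval (c - ε • 1) * S.absval c = S.absval c * S.absval (c - ε • 1) :=
    S.absval_comm hc' (S.absval_mem hc) hmc'
  have hcomm : (S.absval c + ε • (1:R)) * S.absval (c - ε • 1)
      = S.absval (c - ε • 1) * (S.absval c + ε • (1:R)) :=
    (comm_add' hkm (central_comm ε _).symm).symm
  -- squares
  have hk2 : S.absval (c - ε • 1) * S.absval (c - ε • 1) = (c - ε • 1) * (c - ε • 1) :=
    S.absval_sq hc'
  have hdiff : (S.absval c + ε • (1:R)) * (S.absval c + ε • (1:R))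
      - S.absval (c - ε • 1) * S.absval (c - ε • 1)
      = (2 * ε) • (S.absval c + c) := by
    rw [hk2]
    have e1 : (S.absval c + ε • (1:R)) * (S.absval c + ε • (1:R))
        = S.absval c * S.absval c + (2 * ε) • S.absval c + (ε * ε) • (1:R) := by
      simp only [add_mul, mul_add, smul_mul_assoc, mul_smul_comm, one_mul, mul_one,
        smul_smul, smul_add, two_mul, add_smul]
      abel
    have e2 : (c - ε • (1:R)) * (c - ε • (1:R))
        = c * c - (2 * ε) • c + (ε * ε) • (1:R) := by
      simp only [sub_mul, mul_sub, smul_mul_assoc, mul_smul_comm, one_mul, mul_one,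
        smul_smul, smul_sub, two_mul, add_smul]
      abel
    rw [e1, e2, S.absval_sq hc, smul_add]
    abel
  have hsqle : S.le (S.absval (c - ε • 1) * S.absval (c - ε • 1))
      ((S.absval c + ε • (1:R)) * (S.absval c + ε • (1:R))) := by
    rw [S.sub_nonneg' (S.sq_mem _ hkA) (S.sq_mem _ hhA), hdiff]
    apply S.smul_nonneg _ (by positivity) _ (S.A.add_mem (S.absval_mem hc) hc)
    have := (S.sub_nonneg' (S.A.neg_mem hc) (S.absval_mem hc)).1 (S.neg_le_absval hc)
    rwa [sub_neg_eq_add] at this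
  have hkle : S.le (S.absval (c - ε • 1)) (S.absval c + ε • (1:R)) :=
    S.le_of_sq_le_sq hhA hkA hh0 hcomm hsqle
  -- conclude
  unfold pospart
  apply S.smul_le_smul' (by norm_num) (S.A.add_mem hkA hc') (S.A.add_mem (S.absval_mem hc) hc)
  have e3 : S.absval c + c = (S.absval c + ε • (1:R)) + (c - ε • (1:R)) := by abel
  rw [e3]
  exact S.add_le_add' hkA hhA hc' hc' hkle (S.le_refl' hc')

end SynapticAlgebra
namespace SynapticAlgebra
set_option linter.unusedSectionVars false

variable {R : Type*} [Ring R] [Algebra ℝ R] (S : SynapticAlgebra R)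

theorem carr_nonneg {s : R} (hs : s ∈ S.A) : S.le 0 (S.carr s) := by
  rw [← S.carr_idem s hs]
  exact S.sq_nn _ (S.carr_mem s hs)

theorem carr_le_one {s : R} (hs : s ∈ S.A) : S.le (S.carr s) 1 := by
  rw [S.sub_nonneg' (S.carr_mem s hs) S.one_mem]
  have e1 : (1 - S.carr s) * (1 - S.carr s)
      = 1 - S.carr s - S.carr s + S.carr s * S.carr s := by noncomm_ring
  have e2 : (1 - S.carr s) * (1 - S.carr s) = 1 - S.carr s := by
    rw [e1, S.carr_idem s hs]; abel
  rw [← e2]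
  exact S.sq_nn _ (S.A.sub_mem S.one_mem (S.carr_mem s hs))

theorem mul_carr_q {s : R} (hs : s ∈ S.A) : s * (1 - S.carr s) = 0 := by
  apply (S.carr_spec s hs _ (S.A.sub_mem S.one_mem (S.carr_mem s hs))).2
  rw [mul_sub, mul_one, S.carr_idem s hs, sub_self]

theorem mul_carr {s : R} (hs : s ∈ S.A) : s * S.carr s = s := by
  have := S.mul_carr_q hs
  rw [mul_sub, mul_one, sub_eq_zero] at this
  exact this.symm

theorem carr_mul {s : R} (hs : s ∈ S.A) : S.carr s * s = s := by
  have h := S.mul_eq_zero_symm hs (S.A.sub_mem S.one_mem (S.carr_mem s hs)) (S.mul_carr_q hs)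
  rw [sub_mul, one_mul, sub_eq_zero] at h
  exact h.symm

theorem carr_comm {s b : R} (hs : s ∈ S.A) (hb : b ∈ S.A) (h : s * b = b * s) :
    S.carr s * b = b * S.carr s := by
  have hqA : (1 : R) - S.carr s ∈ S.A := S.A.sub_mem S.one_mem (S.carr_mem s hs)
  have hjA : b * (1 - S.carr s) + (1 - S.carr s) * b ∈ S.A := S.jordan_mem hb hqA
  have hsq0 : s * (1 - S.carr s) = 0 := S.mul_carr_q hs
  have hqs0 : (1 - S.carr s) * s = 0 := S.mul_eq_zero_symm hs hqA hsq0
  have hsj : s * (b * (1 - S.carr s) + (1 - S.carr s) * b) = 0 := by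
    rw [mul_add, ← mul_assoc, h, mul_assoc, hsq0, mul_zero, ← mul_assoc, hsq0, zero_mul,
      add_zero]
  have hej : S.carr s * (b * (1 - S.carr s) + (1 - S.carr s) * b) = 0 :=
    (S.carr_spec s hs _ hjA).1 hsj
  have hje : (b * (1 - S.carr s) + (1 - S.carr s) * b) * S.carr s = 0 :=
    S.mul_eq_zero_symm (S.carr_mem s hs) hjA hej
  have heq : S.carr s * (1 - S.carr s) = 0 := by
    rw [mul_sub, mul_one, S.carr_idem s hs, sub_self]
  have hqe : (1 - S.carr s) * S.carr s = 0 := by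
    rw [sub_mul, one_mul, S.carr_idem s hs, sub_self]
  -- from hej : e*b*q = 0, so e*b = e*b*e
  have h1 : S.carr s * b * (1 - S.carr s) = 0 := by
    have := hej
    rw [mul_add, ← mul_assoc, ← mul_assoc, heq, zero_mul, add_zero] at this
    exact this
  -- from hje : q*b*e = 0
  have h2 : (1 - S.carr s) * b * S.carr s = 0 := by
    have h3 : b * (1 - S.carr s) * S.carr s = 0 := by
      rw [mul_assoc, hqe, mul_zero]
    have h4 := hje
    rw [add_mul, h3, zero_add] at h4
    exact h4
  have e1 : S.carr s * b = S.carr s * b * S.carr s := by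
    have h5 := h1
    rw [mul_sub, mul_one, sub_eq_zero] at h5
    exact h5
  have e2 : b * S.carr s = S.carr s * b * S.carr s := by
    have h6 := h2
    rw [sub_mul, one_mul, sub_mul, sub_eq_zero] at h6
    exact h6
  exact e1.trans e2.symm

theorem carr_of_eq_zero : S.carr (0 : R) = 0 := by
  have h := (S.carr_spec 0 S.A.zero_mem (S.carr 0) (S.carr_mem 0 S.A.zero_mem)).1
    (zero_mul _)
  rwa [S.carr_idem 0 S.A.zero_mem] at h

theorem carr_eq_one_of_inv {s t : R} (hs : s ∈ S.A) (h : t * s = 1) : S.carr s = 1 := by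
  have hsq0 : s * (1 - S.carr s) = 0 := S.mul_carr_q hs
  have : (1 : R) - S.carr s = 0 := by
    calc (1 : R) - S.carr s = (t * s) * (1 - S.carr s) := by rw [h, one_mul]
    _ = t * (s * (1 - S.carr s)) := by rw [mul_assoc]
    _ = 0 := by rw [hsq0, mul_zero]
  rw [sub_eq_zero] at this
  exact this.symm

theorem carr_mono {s z : R} (hs : s ∈ S.A) (hz : z ∈ S.A) (h0 : S.le 0 s)
    (h : S.le s z) :
    S.carr s * S.carr z = S.carr s ∧ S.carr z * S.carr s = S.carr s ∧
      S.le (S.carr s) (S.carr z) := by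
  have hqA : (1 : R) - S.carr z ∈ S.A := S.A.sub_mem S.one_mem (S.carr_mem z hz)
  have hq0 : S.le 0 (1 - S.carr z) :=
    (S.sub_nonneg' (S.carr_mem z hz) S.one_mem).1 (S.carr_le_one hz)
  have hzq : z * (1 - S.carr z) = 0 := S.mul_carr_q hz
  have hqz : (1 - S.carr z) * z = 0 := S.mul_eq_zero_symm hz hqA hzq
  have hqzq : (1 - S.carr z) * z * (1 - S.carr z) = 0 := by rw [hqz, zero_mul]
  have hle : S.le ((1 - S.carr z) * s * (1 - S.carr z)) 0 := by
    have := S.conj_mono hs hz hqA hq0 h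
    rwa [hqzq] at this
  have hge : S.le 0 ((1 - S.carr z) * s * (1 - S.carr z)) := S.quad_nn _ hqA s hs hq0 h0
  have hq0' : (1 - S.carr z) * s * (1 - S.carr z) = 0 :=
    S.le_antisymm _ (S.quad_mem _ hqA s hs) 0 S.A.zero_mem hle hge
  obtain ⟨hqs, hsq⟩ := S.quad_zero _ hqA s hs h0 hq0'
  -- s * (1 - carr z) = 0
  have hes : S.carr s * (1 - S.carr z) = 0 := (S.carr_spec s hs _ hqA).1 hsq
  have hef : S.carr s * S.carr z = S.carr s := by
    rw [mul_sub, mul_one, sub_eq_zero] at hes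
    exact hes.symm
  have hqe : (1 - S.carr z) * S.carr s = 0 :=
    S.mul_eq_zero_symm (S.carr_mem s hs) hqA hes
  have hfe : S.carr z * S.carr s = S.carr s := by
    rw [sub_mul, one_mul, sub_eq_zero] at hqe
    exact hqe.symm
  refine ⟨hef, hfe, ?_⟩
  rw [S.sub_nonneg' (S.carr_mem s hs) (S.carr_mem z hz)]
  have key : (1 - S.carr s) * S.carr z * (1 - S.carr s) = S.carr z - S.carr s := by
    have e1 : (1 - S.carr s) * S.carr z * (1 - S.carr s)
        = S.carr z - S.carr s * S.carr z - S.carr z * S.carr s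
          + S.carr s * S.carr z * S.carr s := by noncomm_ring
    rw [e1, hef, hfe, S.carr_idem s hs]
    abel
  rw [← key]
  exact S.quad_nn _ (S.A.sub_mem S.one_mem (S.carr_mem s hs)) _ (S.carr_mem z hz)
    ((S.sub_nonneg' (S.carr_mem s hs) S.one_mem).1 (S.carr_le_one hs)) (S.carr_nonneg hz)

end SynapticAlgebra
namespace SynapticAlgebra
set_option linter.unusedSectionVars false
set_option maxHeartbeats 1000000

variable {R : Type*} [Ring R] [Algebra ℝ R] (S : SynapticAlgebra R)

theorem specProj_def (x : R) (l : ℝ) :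
    S.specProj x l = 1 - S.carr (S.pospart (x - l • 1)) := by
  unfold specProj
  rw [Algebra.algebraMap_eq_smul_one]

section spec2
variable {x : R}

theorem cshift_mem (hx : x ∈ S.A) (l : ℝ) : x - l • (1:R) ∈ S.A :=
  S.A.sub_mem hx (S.A.smul_mem _ S.one_mem)

theorem spec_u_mem (hx : x ∈ S.A) (l : ℝ) : S.pospart (x - l • (1:R)) ∈ S.A :=
  S.pospart_mem (S.cshift_mem hx l)

theorem spec_e_mem (hx : x ∈ S.A) (l : ℝ) :
    S.carr (S.pospart (x - l • (1:R))) ∈ S.A :=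
  S.carr_mem _ (S.spec_u_mem hx l)

theorem specProj_mem (hx : x ∈ S.A) (l : ℝ) : S.specProj x l ∈ S.A := by
  rw [S.specProj_def]
  exact S.A.sub_mem S.one_mem (S.spec_e_mem hx l)

theorem comm_spec_c (l : ℝ) {z : R} (hzx : z * x = x * z) :
    z * (x - l • 1) = (x - l • 1) * z :=
  comm_sub' hzx (central_comm l z).symm

theorem comm_spec_u (hx : x ∈ S.A) (l : ℝ) {z : R} (hz : z ∈ S.A) (hzx : z * x = x * z) :
    z * S.pospart (x - l • 1) = S.pospart (x - l • 1) * z :=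
  S.pospart_comm (S.cshift_mem hx l) hz (comm_spec_c l hzx)

theorem comm_spec_e (hx : x ∈ S.A) (l : ℝ) {z : R} (hz : z ∈ S.A) (hzx : z * x = x * z) :
    z * S.carr (S.pospart (x - l • 1)) = S.carr (S.pospart (x - l • 1)) * z :=
  (S.carr_comm (S.spec_u_mem hx l) hz (S.comm_spec_u hx l hz hzx).symm).symm

theorem comm_specProj (hx : x ∈ S.A) (l : ℝ) {z : R} (hz : z ∈ S.A) (hzx : z * x = x * z) :
    z * S.specProj x l = S.specProj x l * z := by
  rw [S.specProj_def]
  exact comm_sub' (by rw [one_mul, mul_one]) (S.comm_spec_e hx l hz hzx)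

/-- `(x - l)·e_l = (x-l)⁺`. -/
theorem spec_mul_e (hx : x ∈ S.A) (l : ℝ) : (x - l • 1) * S.carr (S.pospart (x - l • 1))
    = S.pospart (x - l • 1) := by
  have hcA := S.cshift_mem hx l
  have huA := S.spec_u_mem hx l
  have hvA : S.pospart (x - l • (1:R)) - (x - l • 1) ∈ S.A := S.A.sub_mem huA hcA
  have hv0 : S.pospart (x - l • (1:R)) * (S.pospart (x - l • 1) - (x - l • 1)) = 0 :=
    S.pospart_mul_negpart hcA
  have hev : S.carr (S.pospart (x - l • (1:R))) * (S.pospart (x - l • 1) - (x - l • 1)) = 0 :=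
    (S.carr_spec _ huA _ hvA).1 hv0
  have hve : (S.pospart (x - l • (1:R)) - (x - l • 1)) * S.carr (S.pospart (x - l • 1)) = 0 :=
    S.mul_eq_zero_symm (S.spec_e_mem hx l) hvA hev
  have e1 : (x - l • (1:R)) * S.carr (S.pospart (x - l • 1))
      = S.pospart (x - l • 1) * S.carr (S.pospart (x - l • 1))
        - (S.pospart (x - l • 1) - (x - l • 1)) * S.carr (S.pospart (x - l • 1)) := by
    rw [← sub_mul, sub_sub_cancel]
  rw [e1, S.mul_carr huA, hve, sub_zero]

theorem spec_mul_p (hx : x ∈ S.A) (l : ℝ) : (x - l • 1) * (1 - S.carr (S.pospart (x - l • 1)))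
    = (x - l • 1) - S.pospart (x - l • 1) := by
  rw [mul_sub, mul_one, S.spec_mul_e hx l]

theorem spec_u_mono (hx : x ∈ S.A) {l l' : ℝ} (h : l ≤ l') :
    S.le (S.pospart (x - l' • 1)) (S.pospart (x - l • 1)) := by
  have := S.pospart_mono_shift (S.cshift_mem hx l) (ε := l' - l) (by linarith)
  have e : x - l • (1:R) - (l' - l) • (1:R) = x - l' • 1 := by
    rw [sub_smul]; abel
  rwa [e] at this

theorem spec_e_chain (hx : x ∈ S.A) {l l' : ℝ} (h : l ≤ l') :
    S.carr (S.pospart (x - l' • 1)) * S.carr (S.pospart (x - l • 1))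
        = S.carr (S.pospart (x - l' • 1)) ∧
    S.carr (S.pospart (x - l • 1)) * S.carr (S.pospart (x - l' • 1))
        = S.carr (S.pospart (x - l' • 1)) ∧
    S.le (S.carr (S.pospart (x - l' • 1))) (S.carr (S.pospart (x - l • 1))) :=
  S.carr_mono (S.spec_u_mem hx l') (S.spec_u_mem hx l)
    (S.pospart_nonneg (S.cshift_mem hx l')) (S.spec_u_mono hx h)

theorem specProj_mono (hx : x ∈ S.A) {l l' : ℝ} (h : l ≤ l') :
    S.le (S.specProj x l) (S.specProj x l') := by
  rw [S.specProj_def, S.specProj_def,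
    S.sub_nonneg' (S.A.sub_mem S.one_mem (S.spec_e_mem hx l))
      (S.A.sub_mem S.one_mem (S.spec_e_mem hx l'))]
  have e : (1:R) - S.carr (S.pospart (x - l' • 1)) - (1 - S.carr (S.pospart (x - l • 1)))
      = S.carr (S.pospart (x - l • 1)) - S.carr (S.pospart (x - l' • 1)) := by abel
  rw [e, ← S.sub_nonneg' (S.spec_e_mem hx l') (S.spec_e_mem hx l)]
  exact (S.spec_e_chain hx h).2.2

theorem spec_q_eq (hx : x ∈ S.A) {l l' : ℝ} : S.specProj x l' - S.specProj x l
    = S.carr (S.pospart (x - l • 1)) - S.carr (S.pospart (x - l' • 1)) := by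
  rw [S.specProj_def, S.specProj_def]
  abel

theorem spec_q_nonneg (hx : x ∈ S.A) {l l' : ℝ} (h : l ≤ l') :
    S.le 0 (S.specProj x l' - S.specProj x l) :=
  (S.sub_nonneg' (S.specProj_mem hx l) (S.specProj_mem hx l')).1 (S.specProj_mono hx h)

theorem spec_key1 (hx : x ∈ S.A) {l l' : ℝ} (h : l ≤ l') :
    S.le (x * (S.specProj x l' - S.specProj x l))
      (l' • (S.specProj x l' - S.specProj x l)) := by
  have hqA : S.specProj x l' - S.specProj x l ∈ S.A :=
    S.A.sub_mem (S.specProj_mem hx l') (S.specProj_mem hx l)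
  have hxqA : x * (S.specProj x l' - S.specProj x l) ∈ S.A :=
    S.mul_mem_of_comm hx hqA
      (comm_sub' (S.comm_specProj hx l' hx rfl) (S.comm_specProj hx l hx rfl))
  rw [S.sub_nonneg' hxqA (S.A.smul_mem _ hqA)]
  -- l'•q - x*q = (u' - c')*q
  have he'q : S.carr (S.pospart (x - l' • 1)) * (S.specProj x l' - S.specProj x l) = 0 := by
    rw [S.spec_q_eq hx, mul_sub, (S.spec_e_chain hx h).1, S.carr_idem _ (S.spec_u_mem hx l'),
      sub_self]
  have hq1 : (1 - S.carr (S.pospart (x - l' • 1))) * (S.specProj x l' - S.specProj x l)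
      = S.specProj x l' - S.specProj x l := by
    rw [sub_mul, one_mul, he'q, sub_zero]
  have e2 : l' • (S.specProj x l' - S.specProj x l) - x * (S.specProj x l' - S.specProj x l)
      = (S.pospart (x - l' • 1) - (x - l' • 1)) * (S.specProj x l' - S.specProj x l) := by
    have e4 : (x - l' • 1) * (S.specProj x l' - S.specProj x l)
        = ((x - l' • 1) - S.pospart (x - l' • 1)) * (S.specProj x l' - S.specProj x l) := by
      nth_rewrite 1 [← hq1]
      rw [← mul_assoc, S.spec_mul_p hx l']
    have e5 : (x - l' • (1:R)) * (S.specProj x l' - S.specProj x l)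
        = x * (S.specProj x l' - S.specProj x l)
          - l' • (S.specProj x l' - S.specProj x l) := by
      rw [sub_mul, smul_mul_assoc, one_mul]
    have e6 : (S.pospart (x - l' • 1) - (x - l' • 1)) * (S.specProj x l' - S.specProj x l)
        = -(((x - l' • 1) - S.pospart (x - l' • 1))
            * (S.specProj x l' - S.specProj x l)) := by
      rw [← neg_mul, neg_sub]
    rw [e6, ← e4, e5, neg_sub]
  rw [e2]
  -- positivity
  have hvA : S.pospart (x - l' • (1:R)) - (x - l' • 1) ∈ S.A :=
    S.A.sub_mem (S.spec_u_mem hx l') (S.cshift_mem hx l')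
  have hvx : x * (S.pospart (x - l' • (1:R)) - (x - l' • 1))
      = (S.pospart (x - l' • (1:R)) - (x - l' • 1)) * x :=
    comm_sub' (S.comm_spec_u hx l' hx rfl) (comm_spec_c l' (z := x) rfl)
  have hcomm : (S.pospart (x - l' • (1:R)) - (x - l' • 1))
        * (S.specProj x l' - S.specProj x l)
      = (S.specProj x l' - S.specProj x l)
        * (S.pospart (x - l' • (1:R)) - (x - l' • 1)) :=
    comm_sub' (S.comm_specProj hx l' hvA hvx.symm)
      (S.comm_specProj hx l hvA hvx.symm)
  exact S.mul_nonneg_of_comm hvA hqA (S.negpart_nonneg (S.cshift_mem hx l'))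
    (S.spec_q_nonneg hx h) hcomm
end spec2

end SynapticAlgebra
namespace SynapticAlgebra
set_option linter.unusedSectionVars false
set_option maxHeartbeats 1000000

variable {R : Type*} [Ring R] [Algebra ℝ R] (S : SynapticAlgebra R)

theorem spec_key2 {x : R} (hx : x ∈ S.A) {l l' : ℝ} (h : l ≤ l') :
    S.le (l • (S.specProj x l' - S.specProj x l))
      (x * (S.specProj x l' - S.specProj x l)) := by
  have hqA : S.specProj x l' - S.specProj x l ∈ S.A :=
    S.A.sub_mem (S.specProj_mem hx l') (S.specProj_mem hx l)
  have hxqA : x * (S.specProj x l' - S.specProj x l) ∈ S.A :=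
    S.mul_mem_of_comm hx hqA
      (comm_sub' (S.comm_specProj hx l' hx rfl) (S.comm_specProj hx l hx rfl))
  rw [S.sub_nonneg' (S.A.smul_mem _ hqA) hxqA]
  have heq : S.carr (S.pospart (x - l • 1)) * (S.specProj x l' - S.specProj x l)
      = S.specProj x l' - S.specProj x l := by
    rw [S.spec_q_eq hx, mul_sub, S.carr_idem _ (S.spec_u_mem hx l),
      (S.spec_e_chain hx h).2.1]
  have e5 : (x - l • (1:R)) * (S.specProj x l' - S.specProj x l)
      = x * (S.specProj x l' - S.specProj x l)
        - l • (S.specProj x l' - S.specProj x l) := by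
    rw [sub_mul, smul_mul_assoc, one_mul]
  have e2 : x * (S.specProj x l' - S.specProj x l)
        - l • (S.specProj x l' - S.specProj x l)
      = S.pospart (x - l • 1) * (S.specProj x l' - S.specProj x l) := by
    rw [← e5]
    nth_rewrite 1 [← heq]
    rw [← mul_assoc, S.spec_mul_e hx l]
  rw [e2]
  have hux : S.pospart (x - l • (1:R)) * x = x * S.pospart (x - l • (1:R)) :=
    (S.comm_spec_u hx l hx rfl).symm
  have hcomm : S.pospart (x - l • (1:R)) * (S.specProj x l' - S.specProj x l)
      = (S.specProj x l' - S.specProj x l) * S.pospart (x - l • (1:R)) :=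
    comm_sub' (S.comm_specProj hx l' (S.spec_u_mem hx l) hux)
      (S.comm_specProj hx l (S.spec_u_mem hx l) hux)
  exact S.mul_nonneg_of_comm (S.spec_u_mem hx l) hqA
    (S.pospart_nonneg (S.cshift_mem hx l)) (S.spec_q_nonneg hx h) hcomm

theorem specProj_bot {x : R} (hx : x ∈ S.A) {l : ℝ} (h : S.le 1 (x - l • 1)) :
    S.specProj x l = 0 := by
  have hcA := S.cshift_mem hx l
  have hc0 : S.le 0 (x - l • (1:R)) :=
    S.le_trans' S.A.zero_mem S.one_mem hcA S.one_nonneg h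
  obtain ⟨t, htA, h1, h2⟩ := S.inv_exists _ hcA h
  rw [S.specProj_def, S.pospart_of_nonneg hcA hc0, S.carr_eq_one_of_inv hcA h2, sub_self]

theorem specProj_top {x : R} (hx : x ∈ S.A) {l : ℝ} (h : S.le x (l • 1)) :
    S.specProj x l = 1 := by
  have hcA := S.cshift_mem hx l
  have hc0 : S.le (x - l • (1:R)) 0 := by
    rw [S.sub_nonneg' hcA S.A.zero_mem]
    have h3 := (S.sub_nonneg' hx (S.A.smul_mem _ S.one_mem)).1 h
    have e : (0:R) - (x - l • 1) = l • 1 - x := by abel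
    rwa [e]
  rw [S.specProj_def, S.pospart_of_nonpos hcA hc0, S.carr_of_eq_zero, sub_zero]

theorem smul_one_mono {r r' : ℝ} (h : r ≤ r') : S.le (r • (1:R)) (r' • (1:R)) := by
  rw [S.sub_nonneg' (S.A.smul_mem _ S.one_mem) (S.A.smul_mem _ S.one_mem), ← sub_smul]
  exact S.smul_one_nonneg (by linarith)

theorem le_neg_flip {x y : R} (hx : x ∈ S.A) (hy : y ∈ S.A) (h : S.le x y) :
    S.le (-y) (-x) := by
  rw [S.sub_nonneg' (S.A.neg_mem hy) (S.A.neg_mem hx)]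
  have e : -x - -y = y - x := by abel
  rw [e]
  exact (S.sub_nonneg' hx hy).1 h

end SynapticAlgebra

/-- grid points -/
def gridPt (K δ : ℝ) (i : ℕ) : ℝ := (i : ℝ) * δ - (K + 1)

theorem gridPt_succ (K δ : ℝ) (n : ℕ) : gridPt K δ (n + 1) = gridPt K δ n + δ := by
  unfold gridPt; push_cast; ring

theorem gridPt_le_succ (K δ : ℝ) (hδ : 0 ≤ δ) (n : ℕ) :
    gridPt K δ n ≤ gridPt K δ (n + 1) := by
  rw [gridPt_succ]; linarith

namespace SynapticAlgebra

variable {R : Type*} [Ring R] [Algebra ℝ R]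

/-- partial sums of spectral projections over the grid -/
noncomputable def specSum (S : SynapticAlgebra R) (x : R) (K δ : ℝ) : ℕ → R
  | 0 => 0
  | n + 1 => specSum S x K δ n + S.specProj x (gridPt K δ n)

variable (S : SynapticAlgebra R)

theorem specSum_mem {x : R} (hx : x ∈ S.A) (K δ : ℝ) :
    ∀ n, S.specSum x K δ n ∈ S.A := by
  intro n
  induction n with
  | zero => simp only [specSum]; exact S.A.zero_mem
  | succ n ih => simp only [specSum]; exact S.A.add_mem ih (S.specProj_mem hx _)

theorem specSum_mono {x y : R} (hx : x ∈ S.A) (hy : y ∈ S.A) (K δ : ℝ)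
    (h : ∀ l : ℝ, S.le (S.specProj y l) (S.specProj x l)) :
    ∀ n, S.le (S.specSum y K δ n) (S.specSum x K δ n) := by
  intro n
  induction n with
  | zero => simp only [specSum]; exact S.le_refl' S.A.zero_mem
  | succ n ih =>
    simp only [specSum]
    exact S.add_le_add' (S.specSum_mem hy K δ n) (S.specSum_mem hx K δ n)
      (S.specProj_mem hy _) (S.specProj_mem hx _) ih (h _)

end SynapticAlgebra
namespace SynapticAlgebra
set_option linter.unusedSectionVars false
set_option maxHeartbeats 2000000

variable {R : Type*} [Ring R] [Algebra ℝ R] (S : SynapticAlgebra R)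

theorem riemann_bound {x : R} (hx : x ∈ S.A) {K δ : ℝ} (hK : 0 ≤ K) (hδ : 0 < δ)
    {N : ℕ} (hlow : S.le ((-K) • (1:R)) x) (hup : S.le x (K • (1:R)))
    (hNδ : (N : ℝ) * δ = 2 * K + 2) :
    S.le x ((K + 1) • (1:R) - δ • S.specSum x K δ N) ∧
    S.le ((K + 1) • (1:R) - δ • S.specSum x K δ N) (x + δ • 1) := by
  have hδ0 : 0 ≤ δ := le_of_lt hδ
  have hpA : ∀ m : ℕ, S.specProj x (gridPt K δ m) ∈ S.A := fun m => S.specProj_mem hx _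
  have hxpA : ∀ m : ℕ, x * S.specProj x (gridPt K δ m) ∈ S.A := fun m =>
    S.mul_mem_of_comm hx (hpA m) (S.comm_specProj hx _ hx rfl)
  have hTA : ∀ m : ℕ, S.specSum x K δ m ∈ S.A := S.specSum_mem hx K δ
  have hFA : ∀ m : ℕ,
      gridPt K δ m • S.specProj x (gridPt K δ m) - δ • S.specSum x K δ m ∈ S.A :=
    fun m => S.A.sub_mem (S.A.smul_mem _ (hpA m)) (S.A.smul_mem _ (hTA m))
  have hqAg : ∀ n : ℕ,
      S.specProj x (gridPt K δ (n+1)) - S.specProj x (gridPt K δ n) ∈ S.A :=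
    fun n => S.A.sub_mem (hpA (n+1)) (hpA n)
  have hxqg : ∀ n : ℕ,
      x * (S.specProj x (gridPt K δ (n+1)) - S.specProj x (gridPt K δ n)) ∈ S.A :=
    fun n => S.mul_mem_of_comm hx (hqAg n) (comm_sub' (S.comm_specProj hx _ hx rfl)
      (S.comm_specProj hx _ hx rfl))
  have hgN : gridPt K δ N = K + 1 := by unfold gridPt; rw [hNδ]; ring
  have hp0 : S.specProj x (gridPt K δ 0) = 0 := by
    apply S.specProj_bot hx
    have e1 : gridPt K δ 0 = -(K+1) := by unfold gridPt; simp
    rw [e1, S.sub_nonneg' S.one_mem (S.cshift_mem hx _)]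
    have e2 : x - (-(K+1)) • (1:R) - 1 = x - (-K) • (1:R) := by
      rw [neg_smul, neg_smul, add_smul, one_smul]
      abel
    rw [e2]
    exact (S.sub_nonneg' (S.A.smul_mem _ S.one_mem) hx).1 hlow
  have hpN : S.specProj x (gridPt K δ N) = 1 := by
    apply S.specProj_top hx
    rw [hgN]
    exact S.le_trans' hx (S.A.smul_mem _ S.one_mem) (S.A.smul_mem _ S.one_mem) hup
      (S.smul_one_mono (by linarith))
  have claimA : ∀ n : ℕ, S.le (x * S.specProj x (gridPt K δ n))
      (gridPt K δ n • S.specProj x (gridPt K δ n) - δ • S.specSum x K δ n) := by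
    intro n
    induction n with
    | zero =>
      rw [hp0]
      simp only [specSum, mul_zero, smul_zero, sub_zero]
      exact S.le_refl' S.A.zero_mem
    | succ n ih =>
      have key1 := S.spec_key1 hx (gridPt_le_succ K δ hδ0 n)
      have hsum := S.add_le_add' (hxpA n) (hFA n) (hxqg n) (S.A.smul_mem _ (hqAg n)) ih key1
      have eL : x * S.specProj x (gridPt K δ n)
          + x * (S.specProj x (gridPt K δ (n+1)) - S.specProj x (gridPt K δ n))
          = x * S.specProj x (gridPt K δ (n+1)) := by
        rw [mul_sub]; abel
      have eR : gridPt K δ n • S.specProj x (gridPt K δ n) - δ • S.specSum x K δ n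
          + gridPt K δ (n+1)
            • (S.specProj x (gridPt K δ (n+1)) - S.specProj x (gridPt K δ n))
          = gridPt K δ (n+1) • S.specProj x (gridPt K δ (n+1))
            - δ • S.specSum x K δ (n+1) := by
        simp only [specSum]
        rw [gridPt_succ]
        match_scalars <;> ring
      rw [eL, eR] at hsum
      exact hsum
  have claimB : ∀ n : ℕ, S.le
      (gridPt K δ n • S.specProj x (gridPt K δ n) - δ • S.specSum x K δ n)
      (x * S.specProj x (gridPt K δ n) + δ • S.specProj x (gridPt K δ n)) := by
    intro n
    induction n with
    | zero =>
      rw [hp0]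
      simp only [specSum, mul_zero, smul_zero, sub_zero, add_zero]
      exact S.le_refl' S.A.zero_mem
    | succ n ih =>
      have key2 := S.spec_key2 hx (gridPt_le_succ K δ hδ0 n)
      have hmem1 : x * S.specProj x (gridPt K δ n) + δ • S.specProj x (gridPt K δ n)
          + gridPt K δ (n+1)
            • (S.specProj x (gridPt K δ (n+1)) - S.specProj x (gridPt K δ n)) ∈ S.A :=
        S.A.add_mem (S.A.add_mem (hxpA n) (S.A.smul_mem _ (hpA n)))
          (S.A.smul_mem _ (hqAg n))
      have hmem2 : x * S.specProj x (gridPt K δ (n+1))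
          + δ • S.specProj x (gridPt K δ (n+1)) ∈ S.A :=
        S.A.add_mem (hxpA (n+1)) (S.A.smul_mem _ (hpA (n+1)))
      have eF : gridPt K δ (n+1) • S.specProj x (gridPt K δ (n+1))
            - δ • S.specSum x K δ (n+1)
          = (gridPt K δ n • S.specProj x (gridPt K δ n) - δ • S.specSum x K δ n)
            + gridPt K δ (n+1)
              • (S.specProj x (gridPt K δ (n+1)) - S.specProj x (gridPt K δ n)) := by
        simp only [specSum]
        rw [gridPt_succ]
        match_scalars <;> ring
      have step1 := S.add_le_add' (hFA n)
        (S.A.add_mem (hxpA n) (S.A.smul_mem δ (hpA n)))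
        (S.A.smul_mem (gridPt K δ (n+1)) (hqAg n))
        (S.A.smul_mem (gridPt K δ (n+1)) (hqAg n)) ih
        (S.le_refl' (S.A.smul_mem (gridPt K δ (n+1)) (hqAg n)))
      have step1' : S.le (gridPt K δ (n+1) • S.specProj x (gridPt K δ (n+1))
          - δ • S.specSum x K δ (n+1))
          (x * S.specProj x (gridPt K δ n) + δ • S.specProj x (gridPt K δ n)
            + gridPt K δ (n+1)
              • (S.specProj x (gridPt K δ (n+1)) - S.specProj x (gridPt K δ n))) := by
        rw [eF]
        exact step1
      have step2 : S.le (x * S.specProj x (gridPt K δ n) + δ • S.specProj x (gridPt K δ n)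
            + gridPt K δ (n+1)
              • (S.specProj x (gridPt K δ (n+1)) - S.specProj x (gridPt K δ n)))
          (x * S.specProj x (gridPt K δ (n+1))
            + δ • S.specProj x (gridPt K δ (n+1))) := by
        rw [S.sub_nonneg' hmem1 hmem2]
        have eD : x * S.specProj x (gridPt K δ (n+1)) + δ • S.specProj x (gridPt K δ (n+1))
            - (x * S.specProj x (gridPt K δ n) + δ • S.specProj x (gridPt K δ n)
              + gridPt K δ (n+1)
                • (S.specProj x (gridPt K δ (n+1)) - S.specProj x (gridPt K δ n)))
            = x * (S.specProj x (gridPt K δ (n+1)) - S.specProj x (gridPt K δ n))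
              - gridPt K δ n
                • (S.specProj x (gridPt K δ (n+1)) - S.specProj x (gridPt K δ n)) := by
          rw [mul_sub, gridPt_succ]
          match_scalars <;> ring
        rw [eD, ← S.sub_nonneg' (S.A.smul_mem _ (hqAg n)) (hxqg n)]
        exact key2
      exact S.le_trans' (hFA (n+1)) hmem1 hmem2 step1' step2
  constructor
  · have hA := claimA N
    rwa [hpN, mul_one, hgN] at hA
  · have hB := claimB N
    rwa [hpN, mul_one, hgN] at hB

end SynapticAlgebra
/-- The spectral order implies the synaptic order. -/
theorem specLE_imp_le {R : Type*} [Ring R] [Algebra ℝ R]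
    (S : SynapticAlgebra R) (a b : R) (ha : a ∈ S.A) (hb : b ∈ S.A) :
    S.specLE a b → S.le a b := by
  intro hs
  have hs' : ∀ l : ℝ, S.le (S.specProj b l) (S.specProj a l) := hs
  obtain ⟨n1, h1⟩ := S.one_order_unit a ha
  obtain ⟨n2, h2⟩ := S.one_order_unit (-a) (S.A.neg_mem ha)
  obtain ⟨n3, h3⟩ := S.one_order_unit b hb
  obtain ⟨n4, h4⟩ := S.one_order_unit (-b) (S.A.neg_mem hb)
  set K : ℝ := ((n1 + n2 + n3 + n4 : ℕ) : ℝ) with hKdef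
  have hK0 : (0:ℝ) ≤ K := by rw [hKdef]; positivity
  have hc1 : (n1 : ℝ) ≤ K := by rw [hKdef]; push_cast; nlinarith [Nat.cast_nonneg (α := ℝ) n1, Nat.cast_nonneg (α := ℝ) n2, Nat.cast_nonneg (α := ℝ) n3, Nat.cast_nonneg (α := ℝ) n4]
  have hc2 : (n2 : ℝ) ≤ K := by rw [hKdef]; push_cast; nlinarith [Nat.cast_nonneg (α := ℝ) n1, Nat.cast_nonneg (α := ℝ) n2, Nat.cast_nonneg (α := ℝ) n3, Nat.cast_nonneg (α := ℝ) n4]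
  have hc3 : (n3 : ℝ) ≤ K := by rw [hKdef]; push_cast; nlinarith [Nat.cast_nonneg (α := ℝ) n1, Nat.cast_nonneg (α := ℝ) n2, Nat.cast_nonneg (α := ℝ) n3, Nat.cast_nonneg (α := ℝ) n4]
  have hc4 : (n4 : ℝ) ≤ K := by rw [hKdef]; push_cast; nlinarith [Nat.cast_nonneg (α := ℝ) n1, Nat.cast_nonneg (α := ℝ) n2, Nat.cast_nonneg (α := ℝ) n3, Nat.cast_nonneg (α := ℝ) n4]
  have hupa : S.le a (K • (1:R)) :=
    S.le_trans' ha (S.A.smul_mem _ S.one_mem) (S.A.smul_mem _ S.one_mem) h1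
      (S.smul_one_mono hc1)
  have hupb : S.le b (K • (1:R)) :=
    S.le_trans' hb (S.A.smul_mem _ S.one_mem) (S.A.smul_mem _ S.one_mem) h3
      (S.smul_one_mono hc3)
  have hlowa : S.le ((-K) • (1:R)) a := by
    have h5 : S.le (-a) (K • (1:R)) :=
      S.le_trans' (S.A.neg_mem ha) (S.A.smul_mem _ S.one_mem) (S.A.smul_mem _ S.one_mem) h2
        (S.smul_one_mono hc2)
    have h6 := S.le_neg_flip (S.A.neg_mem ha) (S.A.smul_mem _ S.one_mem) h5
    rwa [neg_neg, ← neg_smul] at h6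
  have hlowb : S.le ((-K) • (1:R)) b := by
    have h5 : S.le (-b) (K • (1:R)) :=
      S.le_trans' (S.A.neg_mem hb) (S.A.smul_mem _ S.one_mem) (S.A.smul_mem _ S.one_mem) h4
        (S.smul_one_mono hc4)
    have h6 := S.le_neg_flip (S.A.neg_mem hb) (S.A.smul_mem _ S.one_mem) h5
    rwa [neg_neg, ← neg_smul] at h6
  apply S.arch_le' ha hb
  intro ε hε
  obtain ⟨N, hN⟩ := exists_nat_gt ((2*K+2)/ε)
  have hNpos : (0:ℝ) < (N:ℝ) := lt_of_le_of_lt (by positivity) hN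
  set δ : ℝ := (2*K+2)/(N:ℝ) with hδdef
  have hδpos : 0 < δ := by rw [hδdef]; positivity
  have hNδ : (N:ℝ)*δ = 2*K+2 := by
    rw [hδdef]
    field_simp
  have hδε : δ ≤ ε := by
    rw [hδdef]
    rw [div_le_iff₀ hNpos]
    have := (div_lt_iff₀ hε).1 hN
    nlinarith
  have ra := S.riemann_bound ha hK0 hδpos hlowa hupa hNδ
  have rb := S.riemann_bound hb hK0 hδpos hlowb hupb hNδ
  have hSaA := S.specSum_mem ha K δ N
  have hSbA := S.specSum_mem hb K δ N
  have hXaA : (K+1) • (1:R) - δ • S.specSum a K δ N ∈ S.A :=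
    S.A.sub_mem (S.A.smul_mem _ S.one_mem) (S.A.smul_mem _ hSaA)
  have hXbA : (K+1) • (1:R) - δ • S.specSum b K δ N ∈ S.A :=
    S.A.sub_mem (S.A.smul_mem _ S.one_mem) (S.A.smul_mem _ hSbA)
  have hSab : S.le (S.specSum b K δ N) (S.specSum a K δ N) :=
    S.specSum_mono ha hb K δ hs' N
  have mid : S.le ((K+1) • (1:R) - δ • S.specSum a K δ N)
      ((K+1) • (1:R) - δ • S.specSum b K δ N) := by
    rw [S.sub_nonneg' hXaA hXbA]
    have e : (K+1) • (1:R) - δ • S.specSum b K δ N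
        - ((K+1) • (1:R) - δ • S.specSum a K δ N)
        = δ • (S.specSum a K δ N - S.specSum b K δ N) := by
      rw [smul_sub]; abel
    rw [e]
    exact S.smul_nonneg δ (le_of_lt hδpos) _ (S.A.sub_mem hSaA hSbA)
      ((S.sub_nonneg' hSbA hSaA).1 hSab)
  have hbδ : b + δ • (1:R) ∈ S.A := S.A.add_mem hb (S.A.smul_mem _ S.one_mem)
  have hbε : b + ε • (1:R) ∈ S.A := S.A.add_mem hb (S.A.smul_mem _ S.one_mem)
  have last : S.le (b + δ • (1:R)) (b + ε • (1:R)) :=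
    S.add_le_add' hb hb (S.A.smul_mem _ S.one_mem) (S.A.smul_mem _ S.one_mem)
      (S.le_refl' hb) (S.smul_one_mono hδε)
  exact S.le_trans' ha hXaA hbε ra.1
    (S.le_trans' hXaA hXbA hbε mid
      (S.le_trans' hXbA hbδ hbε rb.2 last))
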